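/- For every DBM D over n clocks, canonicalization only decreases bounds and preserves the zone: Canon(D) i j ≤ D i j for all i, j, and ⟦Canon(D)⟧ = ⟦D⟧. -/

import Mathlib

/-- A DBM over `n` clocks: index `0` is the reference clock. -/
abbrev DBM (n : ℕ) := Fin (n + 1) → Fin (n + 1) → WithTop ℝ

/-- The zone of a DBM. -/
def Zone {n : ℕ} (D : DBM n) : Set (Fin (n + 1) → ℝ) :=
  {v | v 0 = 0 ∧ ∀ i j, ((v i - v j : ℝ) : WithTop ℝ) ≤ D i j}

/-- Weight of the path `p 0, p 1, …, p m` in `D`, computed in `WithTop ℝ`. -/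
def pathWeight {n : ℕ} (D : DBM n) (p : ℕ → Fin (n + 1)) (m : ℕ) : WithTop ℝ :=
  ∑ k ∈ Finset.range m, D (p k) (p (k + 1))

/-- Canonicalization: `Canon D i j` is the minimum weight over all paths from `i` to `j`
with at most `n + 1` edges (the minimum of a finite nonempty set in `WithTop ℝ`). -/
noncomputable def Canon {n : ℕ} (D : DBM n) : DBM n := fun i j =>
  sInf {w | ∃ m p, 1 ≤ m ∧ m ≤ n + 1 ∧ p 0 = i ∧ p m = j ∧ w = pathWeight D p m}

/-!
`Canon D i j` minimizes over a set of path weights containing the one-edge path, so it is at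
most `D i j`, whence `Zone (Canon D) ⊆ Zone D`. Conversely, for `v ∈ Zone D` the difference
`v (p 0) - v (p m)` telescopes along any path `p` and is bounded edge by edge, so it is a lower
bound of every path weight, hence of their minimum.
-/

namespace DBM

variable {n : ℕ}

def boundedPathWeights (D : DBM n) (i j : Fin (n + 1)) : Set (WithTop ℝ) :=
  {w | ∃ m p, 1 ≤ m ∧ m ≤ n + 1 ∧ p 0 = i ∧ p m = j ∧ w = pathWeight D p m}

theorem pathWeight_congr (D : DBM n) {p q : ℕ → Fin (n + 1)} {m : ℕ}
    (h : ∀ k ≤ m, p k = q k) : pathWeight D p m = pathWeight D q m :=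
  Finset.sum_congr rfl fun k hk => by
    rw [Finset.mem_range] at hk
    rw [h k hk.le, h (k + 1) hk]

theorem finite_boundedPathWeights (D : DBM n) (i j : Fin (n + 1)) :
    (boundedPathWeights D i j).Finite := by
  -- the weight of a path with `m ≤ n + 1` edges depends only on its first `n + 2` vertices
  refine (Set.finite_range fun mq : Fin (n + 2) × (Fin (n + 2) → Fin (n + 1)) =>
    pathWeight D (fun k => mq.2 ⟨min k (n + 1), by omega⟩) mq.1).subset ?_
  rintro w ⟨m, p, -, hm, -, -, rfl⟩
  refine ⟨(⟨m, by omega⟩, fun a => p a), pathWeight_congr D fun k hk => ?_⟩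
  simp only
  congr
  omega

theorem apply_mem_boundedPathWeights (D : DBM n) (i j : Fin (n + 1)) :
    D i j ∈ boundedPathWeights D i j :=
  ⟨1, fun k => if k = 0 then i else j, le_rfl, by omega, rfl, rfl, by simp [pathWeight]⟩

theorem canon_le (D : DBM n) (i j : Fin (n + 1)) : Canon D i j ≤ D i j :=
  csInf_le (finite_boundedPathWeights D i j).bddBelow (apply_mem_boundedPathWeights D i j)

theorem zone_mono {D D' : DBM n} (h : ∀ i j, D i j ≤ D' i j) : Zone D ⊆ Zone D' :=
  fun _ ⟨h0, hv⟩ => ⟨h0, fun i j => (hv i j).trans (h i j)⟩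

theorem sub_le_pathWeight {D : DBM n} {v : Fin (n + 1) → ℝ}
    (hv : ∀ i j, ((v i - v j : ℝ) : WithTop ℝ) ≤ D i j) (p : ℕ → Fin (n + 1)) (m : ℕ) :
    ((v (p 0) - v (p m) : ℝ) : WithTop ℝ) ≤ pathWeight D p m := by
  rw [← Finset.sum_range_sub' (fun k => v (p k)) m, WithTop.coe_sum]
  exact Finset.sum_le_sum fun k _ => hv (p k) (p (k + 1))

theorem zone_subset_zone_canon (D : DBM n) : Zone D ⊆ Zone (Canon D) := by
  rintro v ⟨h0, hv⟩
  refine ⟨h0, fun i j => le_csInf ⟨_, apply_mem_boundedPathWeights D i j⟩ ?_⟩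
  rintro w ⟨m, p, -, -, rfl, rfl, rfl⟩
  exact sub_le_pathWeight hv p m

end DBM

/-- canonicalization only decreases bounds and preserves the zone. -/
theorem canon_le_and_zone_eq {n : ℕ} (D : DBM n) :
    (∀ i j, Canon D i j ≤ D i j) ∧ Zone (Canon D) = Zone D :=
  ⟨DBM.canon_le D, (DBM.zone_mono (DBM.canon_le D)).antisymm (DBM.zone_subset_zone_canon D)⟩
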